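/- Let 0 < β ≤ 1, d ≥ 1, let x¹ : [0,1] → ℝ^d be continuous with ‖x¹‖_β < ∞, let x² : {(s,t) : 0 ≤ s ≤ t ≤ 1} → ℝ^d ⊗ ℝ^d satisfy the weak geometricity condition x²(s,t) + π(x²(s,t)) = x¹_{s,t} ⊗ x¹_{s,t} for all s ≤ t, where π : ℝ^d ⊗ ℝ^d → ℝ^d ⊗ ℝ^d is the linear map with π(a ⊗ b) = b ⊗ a, and let y : [0,1] → ℝ^d be continuously differentiable. Set P(s,t) := ∫_s^t x¹_{s,u} ⊗ y'(u) du − x²(s,t) and Q(s,t) := y_{s,t} ⊗ x¹_{s,t} − ∫_s^t y'(u) ⊗ x¹_{s,u} du − x²(s,t). Then for all s ≤ t the exact identity Q(s,t) = (y_{s,t} − x¹_{s,t}) ⊗ x¹_{s,t} − π(P(s,t)) holds, and consequently sup_{0 ≤ s < t ≤ 1} |Q(s,t)|/(t − s)^{2β} ≤ ‖x¹‖_β · sup_{0 ≤ s < t ≤ 1} |y_{s,t} − x¹_{s,t}|/(t − s)^β + sup_{0 ≤ s < t ≤ 1} |P(s,t)|/(t − s)^{2β}. -/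

import Mathlib

open MeasureTheory ProbabilityTheory Filter Set

noncomputable section

abbrev Vec (d : ℕ) := EuclideanSpace ℝ (Fin d)
abbrev Ten (d : ℕ) := EuclideanSpace ℝ (Fin d × Fin d)

/-- Elementary tensor `a ⊗ b` of two vectors in `ℝ^d`, realized in `ℝ^{d×d}`
with the Euclidean (Hilbert–Schmidt) norm. -/
def tens {d : ℕ} (a b : Vec d) : Ten d := WithLp.toLp 2 (fun p : Fin d × Fin d => a p.1 * b p.2)

/-- The transposition map `π` with `π (a ⊗ b) = b ⊗ a`. -/
def tswap {d : ℕ} (z : Ten d) : Ten d := WithLp.toLp 2 (fun p : Fin d × Fin d => z (p.2, p.1))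

/-- A subdivision `0 = t₀ < t₁ < ⋯ < t_N = 1` of `[0,1]`. -/
structure Subdivision : Type where
  N : ℕ
  pos : 0 < N
  t : ℕ → ℝ
  zero : t 0 = 0
  last : t N = 1
  mono : ∀ i, i < N → t i < t (i + 1)

/-- The mesh `|D|` of a subdivision. -/
def Subdivision.mesh (D : Subdivision) : ℝ :=
  (Finset.range D.N).sup' (Finset.nonempty_range_iff.mpr D.pos.ne')
    (fun i => D.t (i + 1) - D.t i)

/-- `xD` is the piecewise linear interpolation of `x` along `D`. -/
def IsPL {d : ℕ} (D : Subdivision) (x xD : ℝ → Vec d) : Prop :=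
  ∀ i, i < D.N → ∀ u ∈ Icc (D.t i) (D.t (i + 1)),
    xD u = x (D.t i) + ((u - D.t i) / (D.t (i + 1) - D.t i)) • (x (D.t (i + 1)) - x (D.t i))

/-- `xD'` is the (piecewise constant) derivative of the piecewise linear
interpolation of `x` along `D`. -/
def IsPLDeriv {d : ℕ} (D : Subdivision) (x xD' : ℝ → Vec d) : Prop :=
  ∀ i, i < D.N → ∀ u ∈ Ioo (D.t i) (D.t (i + 1)),
    xD' u = (D.t (i + 1) - D.t i)⁻¹ • (x (D.t (i + 1)) - x (D.t i))

/-- `B` is a standard `d`-dimensional Brownian motion on `[0,1]`: a.s. continuous paths,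
`B 0 = 0`, and the coordinates of all increments over `[0,1]` are jointly independent
centered Gaussians, the coordinates of the increment over `[s,t]` having variance `t - s`.
(Equivalently, the `d` coordinate processes are independent centered Gaussian processes
with covariance `min s t`.) -/
structure IsBrownian (d : ℕ) {Ω : Type*} [MeasurableSpace Ω] (P : Measure Ω)
    (B : ℝ → Ω → Vec d) : Prop where
  meas : ∀ t, Measurable (B t)
  cont : ∀ᵐ ω ∂P, ContinuousOn (fun t => B t ω) (Icc 0 1)
  init : ∀ᵐ ω ∂P, B 0 ω = 0
  incr : ∀ s t : ℝ, 0 ≤ s → s ≤ t → t ≤ 1 → ∀ i : Fin d,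
    Measure.map (fun ω => B t ω i - B s ω i) P = gaussianReal 0 (Real.toNNReal (t - s))
  indep : ∀ (n : ℕ) (τ : ℕ → ℝ), Monotone τ → (∀ k, τ k ∈ Icc (0 : ℝ) 1) →
    iIndepFun
      (fun p : Fin n × Fin d => fun ω => B (τ (p.1.val + 1)) ω p.2 - B (τ p.1.val) ω p.2) P

/-! The identity is pure algebra: weak geometricity says that
`x²(s,t) + π x²(s,t) = x¹_{s,t} ⊗ x¹_{s,t}`, and `π`, being a linear isometry, commutes with the
integral, turning `∫ x¹_{s,u} ⊗ y'(u) du` into `∫ y'(u) ⊗ x¹_{s,u} du`. The estimate then follows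
from `|a ⊗ b| = |a| |b|`, `|π z| = |z|` and the triangle inequality. -/

section Tensor

variable {d : ℕ}

/-- Definitionally `tswapₗᵢ d z = tswap z`. -/
def tswapₗᵢ (d : ℕ) : Ten d ≃ₗᵢ[ℝ] Ten d :=
  LinearIsometryEquiv.piLpCongrLeft 2 ℝ ℝ (Equiv.prodComm (Fin d) (Fin d))

theorem norm_tswap (z : Ten d) : ‖tswap z‖ = ‖z‖ := (tswapₗᵢ d).norm_map z

theorem tswap_sub (z w : Ten d) : tswap (z - w) = tswap z - tswap w := (tswapₗᵢ d).map_sub z w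

theorem tswap_intervalIntegral (f : ℝ → Ten d) (a b : ℝ) :
    tswap (∫ u in a..b, f u) = ∫ u in a..b, tswap (f u) :=
  ((tswapₗᵢ d).toLinearIsometry.intervalIntegral_comp_comm f).symm

theorem tswap_tens (a b : Vec d) : tswap (tens a b) = tens b a :=
  PiLp.ext fun p => by simp [tswap, tens, mul_comm]

theorem tens_sub_left (a b c : Vec d) : tens (a - b) c = tens a c - tens b c :=
  PiLp.ext fun p => by simp [tens, sub_mul]

theorem norm_tens (a b : Vec d) : ‖tens a b‖ = ‖a‖ * ‖b‖ := by
  simp only [EuclideanSpace.norm_eq]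
  rw [← Real.sqrt_mul (by positivity), Finset.sum_mul_sum, Fintype.sum_prod_type]
  simp [tens, norm_mul, mul_pow]

theorem intervalIntegral_tens_eq_tswap (f g : ℝ → Vec d) (a b : ℝ) :
    ∫ u in a..b, tens (f u) (g u) = tswap (∫ u in a..b, tens (g u) (f u)) := by
  simp only [tswap_intervalIntegral, tswap_tens]

theorem tens_sub_tswap_sub_of_add_tswap {z : Ten d} {a : Vec d} (hz : z + tswap z = tens a a)
    (b : Vec d) (w : Ten d) : tens b a - tswap w - z = tens (b - a) a - tswap (w - z) := by
  rw [tswap_sub, tens_sub_left, ← hz]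
  abel

theorem norm_tens_sub_tswap_le (a b : Vec d) (w : Ten d) :
    ‖tens a b - tswap w‖ ≤ ‖a‖ * ‖b‖ + ‖w‖ := by
  simpa only [norm_tens, norm_tswap] using norm_sub_le (tens a b) (tswap w)

end Tensor

theorem integration_by_parts_defect_general (β : ℝ)
    (d : ℕ) (x : ℝ → Vec d) (x2 : ℝ → ℝ → Ten d) (y y' : ℝ → Vec d)
    (Mx M₁ M₂ : ℝ)
    (hhold : ∀ s t : ℝ, 0 ≤ s → s < t → t ≤ 1 → ‖x t - x s‖ ≤ Mx * (t - s) ^ β)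
    (hgeom : ∀ s t : ℝ, 0 ≤ s → s ≤ t → t ≤ 1 →
      x2 s t + tswap (x2 s t) = tens (x t - x s) (x t - x s)) :
    (∀ s t : ℝ, 0 ≤ s → s ≤ t → t ≤ 1 →
      tens (y t - y s) (x t - x s) - (∫ u in s..t, tens (y' u) (x u - x s)) - x2 s t
        = tens ((y t - y s) - (x t - x s)) (x t - x s)
          - tswap ((∫ u in s..t, tens (x u - x s) (y' u)) - x2 s t)) ∧
    ((∀ s t : ℝ, 0 ≤ s → s < t → t ≤ 1 →
        ‖(y t - y s) - (x t - x s)‖ ≤ M₁ * (t - s) ^ β) →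
     (∀ s t : ℝ, 0 ≤ s → s < t → t ≤ 1 →
        ‖(∫ u in s..t, tens (x u - x s) (y' u)) - x2 s t‖ ≤ M₂ * (t - s) ^ (2 * β)) →
     ∀ s t : ℝ, 0 ≤ s → s < t → t ≤ 1 →
       ‖tens (y t - y s) (x t - x s) - (∫ u in s..t, tens (y' u) (x u - x s)) - x2 s t‖
         ≤ (Mx * M₁ + M₂) * (t - s) ^ (2 * β)) := by
  have identity : ∀ s t : ℝ, 0 ≤ s → s ≤ t → t ≤ 1 →
      tens (y t - y s) (x t - x s) - (∫ u in s..t, tens (y' u) (x u - x s)) - x2 s t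
        = tens ((y t - y s) - (x t - x s)) (x t - x s)
          - tswap ((∫ u in s..t, tens (x u - x s) (y' u)) - x2 s t) := by
    intro s t hs hst ht
    rw [intervalIntegral_tens_eq_tswap]
    exact tens_sub_tswap_sub_of_add_tswap (hgeom s t hs hst ht) _ _
  refine ⟨identity, fun h₁ h₂ s t hs hst ht => ?_⟩
  have hpow : (t - s) ^ β * (t - s) ^ β = (t - s) ^ (2 * β) := by
    rw [two_mul, Real.rpow_add (sub_pos.2 hst)]
  rw [identity s t hs hst.le ht]
  calc _ ≤ ‖(y t - y s) - (x t - x s)‖ * ‖x t - x s‖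
          + ‖(∫ u in s..t, tens (x u - x s) (y' u)) - x2 s t‖ := norm_tens_sub_tswap_le _ _ _
    _ ≤ M₁ * (t - s) ^ β * (Mx * (t - s) ^ β) + M₂ * (t - s) ^ (2 * β) :=
        add_le_add (mul_le_mul (h₁ s t hs hst ht) (hhold s t hs hst ht) (norm_nonneg _)
          ((norm_nonneg _).trans (h₁ s t hs hst ht))) (h₂ s t hs hst ht)
    _ = (Mx * M₁ + M₂) * (t - s) ^ (2 * β) := by rw [← hpow]; ring

/-- **Key step in the proof of Proposition 2 of the paper** (the inequality
`A₃ⁿ ≤ ‖x‖ (A₁ⁿ + A₄ⁿ)`). With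
`P(s,t) = ∫_s^t x¹_{s,u} ⊗ y'(u) du − x²(s,t)` and
`Q(s,t) = y_{s,t} ⊗ x¹_{s,t} − ∫_s^t y'(u) ⊗ x¹_{s,u} du − x²(s,t)`,
if `x²` is weakly geometric over `x¹` then
`Q(s,t) = (y_{s,t} − x¹_{s,t}) ⊗ x¹_{s,t} − π(P(s,t))` exactly, and consequently the
`2β`-Hölder bound for `Q` follows from the `β`-Hölder bound `M₁` on `y − x¹` and the
`2β`-Hölder bound `M₂` on `P`, via `‖x¹‖_β ≤ Mx`. -/
theorem integration_by_parts_defect (β : ℝ) (hβ0 : 0 < β) (hβ1 : β ≤ 1)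
    (d : ℕ) (hd : 1 ≤ d) (x : ℝ → Vec d) (x2 : ℝ → ℝ → Ten d) (y y' : ℝ → Vec d)
    (Mx M₁ M₂ : ℝ)
    (hx : ContinuousOn x (Icc 0 1)) (hMx : 0 ≤ Mx)
    (hhold : ∀ s t : ℝ, 0 ≤ s → s < t → t ≤ 1 → ‖x t - x s‖ ≤ Mx * (t - s) ^ β)
    (hgeom : ∀ s t : ℝ, 0 ≤ s → s ≤ t → t ≤ 1 →
      x2 s t + tswap (x2 s t) = tens (x t - x s) (x t - x s))
    (hy' : ContinuousOn y' (Icc 0 1))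
    (hy : ∀ t ∈ Icc (0 : ℝ) 1, HasDerivWithinAt y (y' t) (Icc 0 1) t) :
    (∀ s t : ℝ, 0 ≤ s → s ≤ t → t ≤ 1 →
      tens (y t - y s) (x t - x s) - (∫ u in s..t, tens (y' u) (x u - x s)) - x2 s t
        = tens ((y t - y s) - (x t - x s)) (x t - x s)
          - tswap ((∫ u in s..t, tens (x u - x s) (y' u)) - x2 s t)) ∧
    ((∀ s t : ℝ, 0 ≤ s → s < t → t ≤ 1 →
        ‖(y t - y s) - (x t - x s)‖ ≤ M₁ * (t - s) ^ β) →
     (∀ s t : ℝ, 0 ≤ s → s < t → t ≤ 1 →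
        ‖(∫ u in s..t, tens (x u - x s) (y' u)) - x2 s t‖ ≤ M₂ * (t - s) ^ (2 * β)) →
     ∀ s t : ℝ, 0 ≤ s → s < t → t ≤ 1 →
       ‖tens (y t - y s) (x t - x s) - (∫ u in s..t, tens (y' u) (x u - x s)) - x2 s t‖
         ≤ (Mx * M₁ + M₂) * (t - s) ^ (2 * β)) :=
  integration_by_parts_defect_general β d x x2 y y' Mx M₁ M₂ hhold hgeom

end
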